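/- Let X ⊂ ℂ be a compact set and f : X → X a continuous map which extends to a holomorphic map f : W' → W on some neighborhoods W', W of X, such that f⁻¹(X) = X, the degree of f restricted over X equals N ≥ 2, all critical points of f : W' → W lie in X, and X is not equal to the union of cycles of critical points of f. Let C and C_s denote the sets of non-periodic and periodic critical points of f : X → X respectively, let C(σ) be the open σ-neighborhood of C, and let C_s(σ) be a forward-invariant neighborhood of C_s (f(C_s(σ)) ⊂ C_s(σ)) contained in the σ-neighborhood of C_s. Then for every t ∈ (0, 1) there exist σ > 0 and an integer k₀ such that for every k ≥ k₀ and every y ∈ X: if y, f(y), f²(y), ..., f^k(y) ∉ C_s(σ), then the number of indices j with 0 ≤ j < k and f^j(y) ∈ C(σ) is strictly less than t·k. -/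

import Mathlib

/-!
The critical points of `f` in `X` cannot accumulate, because `f` has finite fibres over `X`,
so the set `C` of non-periodic ones is finite. Fix a window length `H` with `2 #C < t H`, and
then `σ` so small that for `n < H` the `n`-th image of a point `σ`-close to some `c ∈ C` can
be `σ`-close to `C` only if `fⁿ c ∈ C` itself. Within any `H` consecutive times, all visits of
an orbit to `C(σ)` are then shadowed by the orbit of a single `c ∈ C`, which passes through
each point of `C` at most once because no point of `C` is periodic. So every window holds at
most `#C` visits, and `k ≥ H` times are covered by `k / H + 1` windows.
-/

open Set Function Metric Topology Filter

noncomputable section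

/-- The local multiplicity of a holomorphic map `f` at `z`: the least `m ≥ 1` with
`f⁽ᵐ⁾(z) ≠ 0` (so `m = 1` at non-critical points). -/
def locMult (f : ℂ → ℂ) (z : ℂ) : ℕ :=
  sInf {m : ℕ | 0 < m ∧ iteratedDeriv m f z ≠ 0}

/-- The degree of `f` restricted over `X` equals `N`: every point of `X` has exactly `N`
preimages in `X`, counted with multiplicity. -/
def DegOver (f : ℂ → ℂ) (X : Set ℂ) (N : ℕ) : Prop :=
  ∀ x ∈ X, (X ∩ f ⁻¹' {x}).Finite ∧ ∑ᶠ z ∈ X ∩ f ⁻¹' {x}, locMult f z = N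

/-- The union of the cycles of the periodic critical points of `f`. -/
def critCycles (f : ℂ → ℂ) (W' : Set ℂ) : Set ℂ :=
  ⋃ c ∈ {c | c ∈ W' ∧ deriv f c = 0 ∧ ∃ p : ℕ, 0 < p ∧ f^[p] c = c},
    Set.range fun n : ℕ => f^[n] c

/-- `P` is `(k, δ)`-separated for `f`. -/
def IsDynSeparated (f : ℂ → ℂ) (k : ℕ) (δ : ℝ) (P : Set ℂ) : Prop :=
  ∀ z₁ ∈ P, ∀ z₂ ∈ P, z₁ ≠ z₂ → ∃ j < k, δ < dist (f^[j] z₁) (f^[j] z₂)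

/-- `r_k(f, δ)`: the maximal cardinality of a `(k, δ)`-separated subset of `X`. -/
def sepMaxCard (f : ℂ → ℂ) (X : Set ℂ) (k : ℕ) (δ : ℝ) : ℕ :=
  sSup {n : ℕ | ∃ P : Set ℂ, P ⊆ X ∧ P.Finite ∧ IsDynSeparated f k δ P ∧ P.ncard = n}

/-- Topological entropy of `f : X → X`, via `(k, δ)`-separated sets:
`h_top(f) = lim_{δ → 0} limsup_k (1/k) log r_k(f, δ) = sup_{δ > 0} limsup_k (1/k) log r_k(f, δ)`
(the inner quantity is monotone in `δ`). -/
def topEnt (f : ℂ → ℂ) (X : Set ℂ) : EReal :=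
  ⨆ (δ : ℝ) (_ : 0 < δ),
    Filter.limsup (fun k : ℕ => ((Real.log (sepMaxCard f X k δ) / k : ℝ) : EReal)) atTop

/-- The non-periodic critical points of `f : X → X`. -/
def nonPerCrit (f : ℂ → ℂ) (X : Set ℂ) : Set ℂ :=
  {c | c ∈ X ∧ deriv f c = 0 ∧ ¬ ∃ p : ℕ, 0 < p ∧ f^[p] c = c}

/-- The periodic critical points of `f : X → X`. -/
def perCrit (f : ℂ → ℂ) (X : Set ℂ) : Set ℂ :=
  {c | c ∈ X ∧ deriv f c = 0 ∧ ∃ p : ℕ, 0 < p ∧ f^[p] c = c}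

lemma injOn_iterate_of_forall_notMem_periodicPts {α : Type*} {f : α → α} {C : Set α}
    (hC : ∀ z ∈ C, z ∉ periodicPts f) (x : α) :
    InjOn (fun n => f^[n] x) {n | f^[n] x ∈ C} := by
  intro m hm n hn hmn
  by_contra hne
  wlog hlt : m < n generalizing m n
  · exact this hn hm hmn.symm (Ne.symm hne) (by omega)
  refine hC _ hm ⟨n - m, Nat.sub_pos_of_lt hlt, ?_⟩
  change f^[n - m] (f^[m] x) = f^[m] x
  rw [← iterate_add_apply, Nat.sub_add_cancel hlt.le]
  exact hmn.symm

lemma ContinuousWithinAt.eventually_mem_of_mem_thickening {α β : Type*} [PseudoMetricSpace α]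
    [PseudoMetricSpace β] {g : α → β} {X : Set α} {c : α} {C : Set β}
    (hg : ContinuousWithinAt g X c) (hC : IsClosed C) :
    ∀ᶠ σ in 𝓝 (0 : ℝ), ∀ x ∈ X, dist x c < σ → g x ∈ thickening σ C → g c ∈ C := by
  by_cases hgc : g c ∈ C
  · exact Eventually.of_forall fun _ _ _ _ _ => hgc
  obtain ⟨ε, hε, hball⟩ := Metric.isOpen_iff.mp hC.isOpen_compl (g c) hgc
  obtain ⟨δ, hδ, hclose⟩ := Metric.continuousWithinAt_iff.mp hg (ε / 2) (half_pos hε)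
  filter_upwards [Iio_mem_nhds (lt_min hδ (half_pos hε))] with σ hσ x hx hxc hgx
  obtain ⟨z, hzC, hz⟩ := mem_thickening_iff.mp hgx
  have hzc : dist z (g c) < ε := calc
    dist z (g c) ≤ dist (g x) z + dist (g x) (g c) := dist_triangle_left _ _ _
    _ < ε / 2 + ε / 2 := add_lt_add (hz.trans (hσ.trans_le (min_le_right _ _)))
        (hclose hx (hxc.trans (hσ.trans_le (min_le_left _ _))))
    _ = ε := add_halves ε
  exact absurd hzC (hball hzc)

lemma finite_critical_of_finite_fibres {X U : Set ℂ} {f : ℂ → ℂ} (hX : IsCompact X)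
    (hU : IsOpen U) (hXU : X ⊆ U) (hf : DifferentiableOn ℂ f U)
    (hcrit : {z | z ∈ U ∧ deriv f z = 0} ⊆ X) (hfib : ∀ a ∈ X, (X ∩ f ⁻¹' {f a}).Finite) :
    (X ∩ {z | deriv f z = 0}).Finite := by
  by_contra hinf
  obtain ⟨a, haX, hacc⟩ := Set.Infinite.exists_accPt_of_subset_isCompact hinf hX inter_subset_left
  rcases ((hf.analyticOnNhd hU).deriv a (hXU haX)).eventually_eq_zero_or_eventually_ne_zero
    with hzero | hne
  · -- `f` is constant on a ball around `a` made of critical points, which all lie in `X`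
    obtain ⟨ρ, hρ, hball⟩ :=
      Metric.eventually_nhds_iff_ball.mp (hzero.and (hU.mem_nhds (hXU haX)))
    have hconst : ∀ z ∈ ball a ρ, f z = f a := fun z hz =>
      isOpen_ball.is_const_of_deriv_eq_zero (convex_ball a ρ).isPreconnected
        (hf.mono fun w hw => (hball w hw).2) (fun w hw => (hball w hw).1) hz (mem_ball_self hρ)
    exact infinite_of_mem_nhds a (ball_mem_nhds a hρ) <| (hfib a haX).subset fun z hz =>
      ⟨hcrit ⟨(hball z hz).2, (hball z hz).1⟩, hconst z hz⟩
  · obtain ⟨z, hz, hzS⟩ := ((accPt_iff_frequently_nhdsNE.mp hacc).and_eventually hne).exists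
    exact hzS hz.2

section Windows

open Finset

variable {P : ℕ → Prop} [DecidablePred P] {H r : ℕ}

lemma card_filter_range_mul_le (hwin : ∀ a, #{i ∈ range H | P (a + i)} ≤ r) (m : ℕ) :
    #{j ∈ range (m * H) | P j} ≤ m * r := by
  induction m with
  | zero => simp
  | succ m ih =>
    rw [Nat.succ_mul, range_add_eq_union, filter_union, filter_map]
    calc _ ≤ _ := Finset.card_union_le _ _
      _ ≤ m * r + r := add_le_add ih (by rw [card_map]; exact hwin _)
      _ = (m + 1) * r := by ring

lemma card_filter_range_lt_of_window (hwin : ∀ a, #{i ∈ range H | P (a + i)} ≤ r)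
    {t : ℝ} (hH : 2 * r < t * H) {k : ℕ} (hk : H ≤ k) : (#{j ∈ range k | P j} : ℝ) < t * k := by
  have hHpos : 0 < H := Nat.pos_of_ne_zero <| by rintro rfl; simp at hH; linarith
  have hcount : #{j ∈ range k | P j} ≤ (k / H + 1) * r :=
    (Finset.card_le_card (filter_subset_filter _ (range_subset_range.mpr
      (by rw [Nat.succ_mul]; exact (Nat.lt_div_mul_add hHpos).le)))).trans
      (card_filter_range_mul_le hwin _)
  have hq : ((k / H : ℕ) : ℝ) * H ≤ k := by exact_mod_cast Nat.div_mul_le_self k H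
  have hkH : (H : ℝ) ≤ k := by exact_mod_cast hk
  have ht : 0 ≤ t := by
    by_contra! ht
    nlinarith [(Nat.cast_nonneg r : (0 : ℝ) ≤ r), (Nat.cast_nonneg H : (0 : ℝ) ≤ H)]
  calc (#{j ∈ range k | P j} : ℝ) ≤ ((k / H : ℕ) + 1) * r := by exact_mod_cast hcount
    _ < t * k := by nlinarith [(Nat.cast_nonneg (k / H) : (0 : ℝ) ≤ (k / H : ℕ))]

end Windows

section Visits

open Finset
open scoped Classical

variable {α : Type*} [MetricSpace α] {f : α → α} {X : Set α} {C : Finset α} {H : ℕ} {σ : ℝ}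

lemma exists_pos_shadowing (hf : ContinuousOn f X) (hfX : MapsTo f X X) (hCX : ↑C ⊆ X)
    (H : ℕ) : ∃ σ > 0, ∀ c ∈ C, ∀ n < H, ∀ x ∈ X,
      dist x c < σ → f^[n] x ∈ thickening σ (C : Set α) → f^[n] c ∈ C := by
  have hsmall : ∀ᶠ σ in 𝓝[>] (0 : ℝ), ∀ c ∈ C, ∀ n ∈ range H, ∀ x ∈ X,
      dist x c < σ → f^[n] x ∈ thickening σ (C : Set α) → f^[n] c ∈ C := by
    simp only [eventually_all_finset]
    exact fun c hc n _ => nhdsWithin_le_nhds <|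
      ((hf.iterate hfX n) c (hCX hc)).eventually_mem_of_mem_thickening C.finite_toSet.isClosed
  obtain ⟨σ, hσ, hσpos⟩ := (hsmall.and self_mem_nhdsWithin).exists
  exact ⟨σ, hσpos, fun c hc n hn => hσ c hc n (Finset.mem_range.mpr hn)⟩

variable (hshadow : ∀ c ∈ C, ∀ n < H, ∀ x ∈ X,
      dist x c < σ → f^[n] x ∈ thickening σ (C : Set α) → f^[n] c ∈ C)
  (hC : ∀ z ∈ C, z ∉ periodicPts f)
include hshadow hC

-- The visits of the orbit of `x` are shadowed by the orbit of a point `c ∈ C` that is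
-- `σ`-close to `x`, and that orbit meets each point of `C` at most once.
lemma card_visits_le_of_mem_thickening {x : α} (hx : x ∈ X)
    (hxC : x ∈ thickening σ (C : Set α)) :
    #{n ∈ range H | f^[n] x ∈ thickening σ (C : Set α)} ≤ #C := by
  obtain ⟨c, hc, hxc⟩ := mem_thickening_iff.mp hxC
  refine card_le_card_of_injOn (fun n => f^[n] c) (fun n hn => ?_)
    ((injOn_iterate_of_forall_notMem_periodicPts hC c).mono fun n hn => ?_) <;>
  · obtain ⟨hnH, hnx⟩ := mem_filter.mp hn
    exact hshadow c hc n (Finset.mem_range.mp hnH) x hx hxc hnx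

lemma card_window_visits_le (hfX : MapsTo f X X) {y : α} (hy : y ∈ X) (a : ℕ) :
    #{i ∈ range H | f^[a + i] y ∈ thickening σ (C : Set α)} ≤ #C := by
  set W := {i ∈ range H | f^[a + i] y ∈ thickening σ (C : Set α)}
  rcases W.eq_empty_or_nonempty with hW | hW
  · simp [hW]
  have hi₀ := mem_filter.mp (W.min'_mem hW)
  calc #W ≤ #{n ∈ range H | f^[n] (f^[a + W.min' hW] y) ∈ thickening σ (C : Set α)} := by
        refine card_le_card_of_injOn (· - W.min' hW) (fun i hi => ?_)
          (fun i hi j hj hij => ?_)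
        · have hmin_i := W.min'_le i hi
          obtain ⟨hiH, hiy⟩ := mem_filter.mp hi
          dsimp only
          rw [mem_coe, mem_filter, Finset.mem_range, ← iterate_add_apply,
            show i - W.min' hW + (a + W.min' hW) = a + i by omega]
          exact ⟨by rw [Finset.mem_range] at hiH; omega, hiy⟩
        · have hmin_i := W.min'_le i hi
          have hmin_j := W.min'_le j hj
          dsimp only at hij
          omega
    _ ≤ #C := card_visits_le_of_mem_thickening hshadow hC (hfX.iterate _ hy) hi₀.2

end Visits

theorem visits_to_critical_neighborhood_rare_general {X W' : Set ℂ} {f : ℂ → ℂ} {N : ℕ}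
    (hXcomp : IsCompact X) (hW' : IsOpen W')
    (hXW' : X ⊆ W')
    (hf : DifferentiableOn ℂ f W')
    (hXmaps : MapsTo f X X)
    (hdeg : DegOver f X N)
    (hcrit : {z | z ∈ W' ∧ deriv f z = 0} ⊆ X)
    (Ns : ℝ → Set ℂ) :
    ∀ t ∈ Set.Ioo (0 : ℝ) 1, ∃ σ > (0 : ℝ), ∃ k₀ : ℕ, ∀ k ≥ k₀, ∀ y ∈ X,
      (∀ j ≤ k, f^[j] y ∉ Ns σ) →
      (({j : ℕ | j < k ∧ f^[j] y ∈ ⋃ c ∈ nonPerCrit f X, Metric.ball c σ}.ncard : ℝ)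
        < t * k) := by
  classical
  intro t ht
  have hfin : (nonPerCrit f X).Finite :=
    (finite_critical_of_finite_fibres hXcomp hW' hXW' hf hcrit fun a ha =>
      (hdeg (f a) (hXmaps ha)).1).subset fun c hc => ⟨hc.1, hc.2.1⟩
  set C := hfin.toFinset
  have hCX : ↑C ⊆ X := fun c hc => (hfin.mem_toFinset.mp hc).1
  have hCper : ∀ c ∈ C, c ∉ periodicPts f := fun c hc ⟨p, hp, hper⟩ =>
    (hfin.mem_toFinset.mp hc).2.2 ⟨p, hp, hper⟩
  obtain ⟨H, hH⟩ := exists_nat_gt (2 * C.card / t)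
  obtain ⟨σ, hσ, hshadow⟩ := exists_pos_shadowing (hf.mono hXW').continuousOn hXmaps hCX H
  refine ⟨σ, hσ, H, fun k hk y hy _ => ?_⟩
  have hvisits : {j | j < k ∧ f^[j] y ∈ ⋃ c ∈ nonPerCrit f X, ball c σ} =
      ↑(Finset.filter (fun j => f^[j] y ∈ thickening σ (C : Set ℂ)) (Finset.range k)) := by
    ext j
    simp [C, thickening_eq_biUnion_ball]
  rw [hvisits, ncard_coe_finset]
  exact card_filter_range_lt_of_window (card_window_visits_le hshadow hCper hXmaps hy)
    (by rw [div_lt_iff₀ ht.1] at hH; linarith) hk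

/-- **Claim (⋆).** In the setting of the entropy theorem, with all critical points of
`f : W' → W` lying in `X`: for every `t ∈ (0,1)` there exist `σ > 0` and `k₀` such that
for every `k ≥ k₀` and every `y ∈ X`, if `y, f(y), …, f^k(y) ∉ C_s(σ)` then
`#{j : 0 ≤ j < k, f^j(y) ∈ C(σ)} < t·k`. Here `C(σ)` is the `σ`-neighborhood of the set
`C` of non-periodic critical points, and `C_s(σ)` is any chosen forward-invariant open
neighborhood of the set `C_s` of periodic critical points contained in its
`σ`-neighborhood. -/
theorem visits_to_critical_neighborhood_rare {X W' W : Set ℂ} {f : ℂ → ℂ} {N : ℕ}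
    (hXcomp : IsCompact X) (hW' : IsOpen W') (hW : IsOpen W)
    (hXW' : X ⊆ W') (hXW : X ⊆ W)
    (hf : DifferentiableOn ℂ f W') (hmaps : MapsTo f W' W)
    (hXmaps : MapsTo f X X) (hinv : W' ∩ f ⁻¹' X = X)
    (hN : 2 ≤ N) (hdeg : DegOver f X N)
    (hcrit : {z | z ∈ W' ∧ deriv f z = 0} ⊆ X)
    (hX : X ≠ critCycles f W')
    (Ns : ℝ → Set ℂ)
    (hNs : ∀ σ > (0 : ℝ), IsOpen (Ns σ) ∧ perCrit f X ⊆ Ns σ ∧ Ns σ ⊆ W' ∧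
      f '' Ns σ ⊆ Ns σ ∧ Ns σ ⊆ Metric.thickening σ (perCrit f X)) :
    ∀ t ∈ Set.Ioo (0 : ℝ) 1, ∃ σ > (0 : ℝ), ∃ k₀ : ℕ, ∀ k ≥ k₀, ∀ y ∈ X,
      (∀ j ≤ k, f^[j] y ∉ Ns σ) →
      (({j : ℕ | j < k ∧ f^[j] y ∈ ⋃ c ∈ nonPerCrit f X, Metric.ball c σ}.ncard : ℝ)
        < t * k) :=
  visits_to_critical_neighborhood_rare_general hXcomp hW' hXW' hf hXmaps hdeg hcrit Ns
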